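/- For every Gödel set V, the following sentences are 1-satisfiable in G_V if and only if they are classically satisfiable: (i) every quantifier-free sentence; (ii) every sentence, provided 0 is isolated in V; (iii) every prenex sentence; (iv) every purely existential sentence (a prenex sentence all of whose quantifiers are existential). -/

import Mathlib

/-!
Glue an interpretation `I` at a level `ω` such that `V` has no value in `(0, ω]`: atoms of
value at most `ω`, i.e. of value `0`, keep it and all others become `1`, so every atom gets the
sign of its value under `I`. The sign map commutes with `min`, `max` and Gödel implication on
`[0, 1]`, so quantifier-free formulas also take the sign of their value. With `ω = 0` this makes
a prenex formula of positive value true: positivity of a `∀` passes to every instance, that of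
an `∃` to some witness. When `0` is isolated in `V` a positive `ω` exists; values of formulas
then lie in `{0} ∪ (ω, 1]`, so the sign map also commutes with infima, hence with every formula.
-/

namespace GodelPaper

/-- A first-order language: function and relation symbols of each arity. -/
structure Lang where
  Func : ℕ → Type
  Rel : ℕ → Type

/-- A Gödel set: a closed subset of [0,1] containing 0 and 1. -/
def GodelSet (V : Set ℝ) : Prop :=
  IsClosed V ∧ V ⊆ Set.Icc 0 1 ∧ (0:ℝ) ∈ V ∧ (1:ℝ) ∈ V

/-- Terms with variables from `α`. -/
inductive Term (L : Lang) (α : Type) : Type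
  | var : α → Term L α
  | func : ∀ {k}, L.Func k → (Fin k → Term L α) → Term L α

/-- A `V`-interpretation: nonempty domain, interpretation of function symbols,
and truth values in `V` for atomic sentences with parameters. -/
structure Interp (L : Lang) (V : Set ℝ) where
  Dom : Type
  dom_nonempty : Nonempty Dom
  funMap : ∀ {k}, L.Func k → (Fin k → Dom) → Dom
  relVal : ∀ {k}, L.Rel k → (Fin k → Dom) → ℝ
  relVal_mem : ∀ {k} (R : L.Rel k) (v : Fin k → Dom), relVal R v ∈ V

def Term.eval {L : Lang} {V : Set ℝ} (I : Interp L V) {α : Type} (v : α → I.Dom) :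
    Term L α → I.Dom
  | .var i => v i
  | .func f ts => I.funMap f fun j => Term.eval I v (ts j)

/-- Formulas of the Δ-extended language, with free variables among `Fin n`.
The quantifiers bind the *last* variable. Δ-free formulas (i.e. formulas of the
plain language) are singled out by the predicate `DeltaFree` below. -/
inductive Form (L : Lang) : ℕ → Type
  | falsum : ∀ {n}, Form L n
  | atom : ∀ {n k}, L.Rel k → (Fin k → Term L (Fin n)) → Form L n
  | conj : ∀ {n}, Form L n → Form L n → Form L n
  | disj : ∀ {n}, Form L n → Form L n → Form L n
  | impl : ∀ {n}, Form L n → Form L n → Form L n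
  | delta : ∀ {n}, Form L n → Form L n
  | all : ∀ {n}, Form L (n+1) → Form L n
  | ex : ∀ {n}, Form L (n+1) → Form L n

/-- The Gödel truth value of a formula under an interpretation and an
assignment of the free variables. -/
noncomputable def Form.val {L : Lang} {V : Set ℝ} (I : Interp L V) :
    ∀ {n}, Form L n → (Fin n → I.Dom) → ℝ
  | _, .falsum, _ => 0
  | _, .atom R ts, ρ => I.relVal R fun j => Term.eval I ρ (ts j)
  | _, .conj A B, ρ => min (Form.val I A ρ) (Form.val I B ρ)
  | _, .disj A B, ρ => max (Form.val I A ρ) (Form.val I B ρ)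
  | _, .impl A B, ρ => if Form.val I A ρ ≤ Form.val I B ρ then 1 else Form.val I B ρ
  | _, .delta A, ρ => if Form.val I A ρ = 1 then 1 else 0
  | _, .all A, ρ => sInf {v : ℝ | ∃ d : I.Dom, v = Form.val I A (Fin.snoc ρ d)}
  | _, .ex A, ρ => sSup {v : ℝ | ∃ d : I.Dom, v = Form.val I A (Fin.snoc ρ d)}

/-- The value of a sentence. -/
noncomputable def Form.sval {L : Lang} {V : Set ℝ} (I : Interp L V) (A : Form L 0) : ℝ :=
  Form.val I A Fin.elim0

/-- `A` is valid in `G_V`. -/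
def Valid {L : Lang} (V : Set ℝ) (A : Form L 0) : Prop :=
  ∀ I : Interp L V, Form.sval I A = 1

/-- `A` is 1-satisfiable in `G_V`. -/
def OneSat {L : Lang} (V : Set ℝ) (A : Form L 0) : Prop :=
  ∃ I : Interp L V, Form.sval I A = 1

/-- `A` is classically satisfiable: it takes value 1 under a `V`-interpretation
assigning only values in {0,1} to atomic sentences. -/
def ClassSat {L : Lang} (V : Set ℝ) (A : Form L 0) : Prop :=
  ∃ I : Interp L V,
    (∀ {k : ℕ} (R : L.Rel k) (v : Fin k → I.Dom), I.relVal R v = 0 ∨ I.relVal R v = 1) ∧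
    Form.sval I A = 1

/-- ¬A abbreviates A ⊃ ⊥. -/
def Form.not {L : Lang} {n : ℕ} (A : Form L n) : Form L n := Form.impl A Form.falsum

/-- A ↔ B abbreviates (A ⊃ B) ∧ (B ⊃ A). -/
def Form.iff {L : Lang} {n : ℕ} (A B : Form L n) : Form L n :=
  Form.conj (Form.impl A B) (Form.impl B A)

/-- Formulas of the plain language (no Δ). -/
def DeltaFree {L : Lang} : ∀ {n}, Form L n → Prop
  | _, .falsum => True
  | _, .atom _ _ => True
  | _, .conj A B => DeltaFree A ∧ DeltaFree B
  | _, .disj A B => DeltaFree A ∧ DeltaFree B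
  | _, .impl A B => DeltaFree A ∧ DeltaFree B
  | _, .delta _ => False
  | _, .all A => DeltaFree A
  | _, .ex A => DeltaFree A

/-- Quantifier-free formulas. -/
def QuantFree {L : Lang} : ∀ {n}, Form L n → Prop
  | _, .falsum => True
  | _, .atom _ _ => True
  | _, .conj A B => QuantFree A ∧ QuantFree B
  | _, .disj A B => QuantFree A ∧ QuantFree B
  | _, .impl A B => QuantFree A ∧ QuantFree B
  | _, .delta A => QuantFree A
  | _, .all _ => False
  | _, .ex _ => False

/-- Formulas containing no universal quantifier. -/
def AllFree {L : Lang} : ∀ {n}, Form L n → Prop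
  | _, .falsum => True
  | _, .atom _ _ => True
  | _, .conj A B => AllFree A ∧ AllFree B
  | _, .disj A B => AllFree A ∧ AllFree B
  | _, .impl A B => AllFree A ∧ AllFree B
  | _, .delta A => AllFree A
  | _, .all _ => False
  | _, .ex A => AllFree A

/-- Prenex formulas: a block of quantifiers followed by a quantifier-free matrix. -/
inductive IsPrenex {L : Lang} : ∀ {n}, Form L n → Prop
  | qf {n} {A : Form L n} : QuantFree A → IsPrenex A
  | all {n} {A : Form L (n+1)} : IsPrenex A → IsPrenex (Form.all A)
  | ex {n} {A : Form L (n+1)} : IsPrenex A → IsPrenex (Form.ex A)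

/-- Purely existential prenex formulas. -/
inductive ExPrenex {L : Lang} : ∀ {n}, Form L n → Prop
  | qf {n} {A : Form L n} : QuantFree A → ExPrenex A
  | ex {n} {A : Form L (n+1)} : ExPrenex A → ExPrenex (Form.ex A)

/-- The glued interpretation `I_ω`: atoms with value ≤ ω keep their value,
all other atoms get value 1. Same domain and function interpretations. -/
noncomputable def Interp.glue {L : Lang} {V : Set ℝ} (I : Interp L V) (ω : ℝ)
    (h1 : (1:ℝ) ∈ V) : Interp L V where
  Dom := I.Dom
  dom_nonempty := I.dom_nonempty
  funMap := fun {k} f v => I.funMap f v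
  relVal := fun {k} R v => if I.relVal R v ≤ ω then I.relVal R v else 1
  relVal_mem := fun {k} R v => by
    by_cases h : I.relVal R v ≤ ω
    · simpa [h] using I.relVal_mem R v
    · simpa [h] using h1

/-- The Gödel set `V_↑ = {1 - 1/k : k ≥ 1} ∪ {1}`. -/
def Vup : Set ℝ := {x : ℝ | ∃ k : ℕ, 1 ≤ k ∧ x = 1 - 1/(k:ℝ)} ∪ {1}

/-- The `m`-element Gödel set `V_m = {1 - 1/k : 1 ≤ k ≤ m-1} ∪ {1}`. -/
def Vfin (m : ℕ) : Set ℝ :=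
  {x : ℝ | ∃ k : ℕ, 1 ≤ k ∧ k ≤ m - 1 ∧ x = 1 - 1/(k:ℝ)} ∪ {1}

/-- Atomic formula built from a unary predicate. -/
def atom1 {L : Lang} (P : L.Rel 1) {n : ℕ} (t : Term L (Fin n)) : Form L n :=
  Form.atom P fun _ => t

/-- Atomic formula built from a 0-ary predicate (propositional atom). -/
def atom0 {L : Lang} (X : L.Rel 0) {n : ℕ} : Form L n :=
  Form.atom X fun i => i.elim0

def Term.rename {L : Lang} {α β : Type} (f : α → β) : Term L α → Term L β
  | .var i => .var (f i)
  | .func g ts => .func g fun j => Term.rename f (ts j)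

def Form.rename {L : Lang} : ∀ {m n}, (Fin m → Fin n) → Form L m → Form L n
  | _, _, _, .falsum => .falsum
  | _, _, f, .atom R ts => .atom R fun j => (ts j).rename f
  | _, _, f, .conj A B => .conj (A.rename f) (B.rename f)
  | _, _, f, .disj A B => .disj (A.rename f) (B.rename f)
  | _, _, f, .impl A B => .impl (A.rename f) (B.rename f)
  | _, _, f, .delta A => .delta (A.rename f)
  | _, _, f, .all A =>
      .all (A.rename (Fin.lastCases (Fin.last _) fun i => Fin.castSucc (f i)))
  | _, _, f, .ex A =>
      .ex (A.rename (Fin.lastCases (Fin.last _) fun i => Fin.castSucc (f i)))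

/-- Weakening: regard a formula with `n` free variables as one with `n+1`
free variables (not using the new last variable). -/
def Form.lift {L : Lang} {n : ℕ} (A : Form L n) : Form L (n+1) :=
  A.rename Fin.castSucc

def Term.subst {L : Lang} {α β : Type} (σ : α → Term L β) : Term L α → Term L β
  | .var i => σ i
  | .func g ts => .func g fun j => Term.subst σ (ts j)

def Form.subst {L : Lang} : ∀ {m n}, (Fin m → Term L (Fin n)) → Form L m → Form L n
  | _, _, _, .falsum => .falsum
  | _, _, σ, .atom R ts => .atom R fun j => (ts j).subst σ
  | _, _, σ, .conj A B => .conj (A.subst σ) (B.subst σ)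
  | _, _, σ, .disj A B => .disj (A.subst σ) (B.subst σ)
  | _, _, σ, .impl A B => .impl (A.subst σ) (B.subst σ)
  | _, _, σ, .delta A => .delta (A.subst σ)
  | _, _, σ, .all A =>
      .all (A.subst (Fin.lastCases (.var (Fin.last _))
        fun i => (σ i).rename Fin.castSucc))
  | _, _, σ, .ex A =>
      .ex (A.subst (Fin.lastCases (.var (Fin.last _))
        fun i => (σ i).rename Fin.castSucc))

/-- The language `L ∪ {f}` with one new function symbol of arity `a`. -/
def Lang.addFunc (L : Lang) (a : ℕ) : Lang where
  Func := fun k => L.Func k ⊕ PLift (k = a)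
  Rel := L.Rel

/-- The new function symbol of `L.addFunc a`. -/
def newFunc (L : Lang) (a : ℕ) : (L.addFunc a).Func a := Sum.inr ⟨rfl⟩

def Term.emb {L : Lang} {a : ℕ} {α : Type} : Term L α → Term (L.addFunc a) α
  | .var i => .var i
  | .func g ts => .func (Sum.inl g) fun j => Term.emb (ts j)

/-- Embedding of `L`-formulas into the language with the extra function symbol. -/
def Form.emb {L : Lang} {a : ℕ} : ∀ {n}, Form L n → Form (L.addFunc a) n
  | _, .falsum => .falsum
  | _, .atom R ts => .atom R fun j => (ts j).emb
  | _, .conj A B => .conj A.emb B.emb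
  | _, .disj A B => .disj A.emb B.emb
  | _, .impl A B => .impl A.emb B.emb
  | _, .delta A => .delta A.emb
  | _, .all A => .all A.emb
  | _, .ex A => .ex A.emb

/-- Prefix of `n` existential quantifiers (outermost quantifier binds variable 0). -/
def Form.exN {L : Lang} : ∀ n, Form L n → Form L 0
  | 0, A => A
  | n+1, A => Form.exN n (Form.ex A)

/-- Prefix of `n` universal quantifiers (outermost quantifier binds variable 0). -/
def Form.allN {L : Lang} : ∀ n, Form L n → Form L 0
  | 0, A => A
  | n+1, A => Form.allN n (Form.all A)

theorem _root_.Real.sign_monotone : Monotone Real.sign := by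
  intro a b hab
  rcases lt_or_ge a 0 with ha | ha
  · rw [Real.sign_of_neg ha]
    rcases Real.sign_apply_eq b with h | h | h <;> rw [h] <;> norm_num
  · rcases ha.eq_or_lt with rfl | ha
    · rcases hab.eq_or_lt with rfl | hb
      · rfl
      · rw [Real.sign_zero, Real.sign_of_pos hb]; norm_num
    · rw [Real.sign_of_pos ha, Real.sign_of_pos (ha.trans_le hab)]

theorem _root_.Real.sign_le_one (x : ℝ) : Real.sign x ≤ 1 := by
  rcases Real.sign_apply_eq x with h | h | h <;> rw [h] <;> norm_num

theorem _root_.Real.sign_nonneg_of_nonneg {x : ℝ} (hx : 0 ≤ x) : 0 ≤ Real.sign x :=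
  Real.sign_zero ▸ Real.sign_monotone hx

theorem _root_.Real.sign_eq_zero_or_one_of_nonneg {x : ℝ} (hx : 0 ≤ x) :
    Real.sign x = 0 ∨ Real.sign x = 1 := by
  rcases hx.eq_or_lt with rfl | hx
  · exact .inl Real.sign_zero
  · exact .inr (Real.sign_of_pos hx)

theorem _root_.Real.sign_ite_le {a b : ℝ} (hb : 0 ≤ b) :
    Real.sign (if a ≤ b then 1 else b) =
      if Real.sign a ≤ Real.sign b then 1 else Real.sign b := by
  by_cases hab : a ≤ b
  · rw [if_pos hab, if_pos (Real.sign_monotone hab), Real.sign_one]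
  · rw [if_neg hab]
    rcases hb.eq_or_lt with rfl | hb
    · rw [Real.sign_of_pos (lt_of_not_ge hab), Real.sign_zero, if_neg (by norm_num)]
    · rw [Real.sign_of_pos hb, Real.sign_of_pos (hb.trans (lt_of_not_ge hab)), if_pos le_rfl]

theorem _root_.Real.sign_iSup_of_nonneg {ι : Type*} [Nonempty ι] {f : ι → ℝ}
    (hf₀ : ∀ i, 0 ≤ f i) (hf : BddAbove (Set.range f)) :
    Real.sign (⨆ i, f i) = ⨆ i, Real.sign (f i) := by
  by_cases hzero : ∀ i, f i = 0
  · simp only [hzero, Real.sign_zero, ciSup_const]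
  · push Not at hzero
    obtain ⟨i, hi⟩ := hzero
    have hpos : 0 < f i := (hf₀ i).lt_of_ne' hi
    rw [Real.sign_of_pos (hpos.trans_le (le_ciSup hf i))]
    refine le_antisymm ?_ (ciSup_le fun j => Real.sign_le_one _)
    calc (1 : ℝ) = Real.sign (f i) := (Real.sign_of_pos hpos).symm
      _ ≤ ⨆ j, Real.sign (f j) :=
        le_ciSup (f := fun j => Real.sign (f j))
          ⟨1, by rintro _ ⟨j, rfl⟩; exact Real.sign_le_one (f j)⟩ i

theorem _root_.Real.sign_iInf_of_gap {ι : Type*} [Nonempty ι] {f : ι → ℝ} {ω : ℝ}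
    (hω : 0 < ω) (hf₀ : ∀ i, 0 ≤ f i) (hgap : ∀ i, f i ≤ ω → f i = 0) :
    Real.sign (⨅ i, f i) = ⨅ i, Real.sign (f i) := by
  by_cases hzero : ∃ i, f i = 0
  · obtain ⟨i, hi⟩ := hzero
    have hbdd : BddBelow (Set.range f) := ⟨0, by rintro _ ⟨j, rfl⟩; exact hf₀ j⟩
    have hsign₀ : ∀ j, 0 ≤ Real.sign (f j) := fun j => Real.sign_nonneg_of_nonneg (hf₀ j)
    rw [le_antisymm (hi ▸ ciInf_le hbdd i) (le_ciInf hf₀), Real.sign_zero]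
    refine le_antisymm (le_ciInf hsign₀) ?_
    calc ⨅ j, Real.sign (f j) ≤ Real.sign (f i) :=
          ciInf_le (f := fun j => Real.sign (f j)) ⟨0, by rintro _ ⟨j, rfl⟩; exact hsign₀ j⟩ i
      _ = 0 := by rw [hi, Real.sign_zero]
  · push Not at hzero
    have hlarge : ∀ i, ω < f i := fun i => lt_of_not_ge fun h => hzero i (hgap i h)
    rw [Real.sign_of_pos (hω.trans_le (le_ciInf fun i => (hlarge i).le))]
    simp only [Real.sign_of_pos (hω.trans (hlarge _)), ciInf_const]

variable {L : Lang} {V : Set ℝ}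

instance Interp.instNonemptyDom (I : Interp L V) : Nonempty I.Dom := I.dom_nonempty

theorem GodelSet.nonneg (hV : GodelSet V) {v : ℝ} (hv : v ∈ V) : 0 ≤ v := (hV.2.1 hv).1

theorem GodelSet.le_one (hV : GodelSet V) {v : ℝ} (hv : v ∈ V) : v ≤ 1 := (hV.2.1 hv).2

theorem GodelSet.one_mem (hV : GodelSet V) : (1 : ℝ) ∈ V := hV.2.2.2

theorem Form.val_all (I : Interp L V) {n : ℕ} (A : Form L (n + 1)) (ρ : Fin n → I.Dom) :
    (Form.all A).val I ρ = ⨅ d, A.val I (Fin.snoc ρ d) := by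
  simp only [Form.val, iInf, Set.range, eq_comm]

theorem Form.val_ex (I : Interp L V) {n : ℕ} (A : Form L (n + 1)) (ρ : Fin n → I.Dom) :
    (Form.ex A).val I ρ = ⨆ d, A.val I (Fin.snoc ρ d) := by
  simp only [Form.val, iSup, Set.range, eq_comm]

theorem Form.val_mem (hV : GodelSet V) (I : Interp L V) {n : ℕ} {B : Form L n}
    (hB : DeltaFree B) (ρ : Fin n → I.Dom) : B.val I ρ ∈ V := by
  induction B with
  | falsum => exact hV.2.2.1
  | atom R ts => exact I.relVal_mem R _
  | conj A B ihA ihB =>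
    rcases min_choice (A.val I ρ) (B.val I ρ) with h | h
    · simpa only [Form.val, h] using ihA hB.1 ρ
    · simpa only [Form.val, h] using ihB hB.2 ρ
  | disj A B ihA ihB =>
    rcases max_choice (A.val I ρ) (B.val I ρ) with h | h
    · simpa only [Form.val, h] using ihA hB.1 ρ
    · simpa only [Form.val, h] using ihB hB.2 ρ
  | impl A B ihA ihB =>
    simp only [Form.val]
    split_ifs
    · exact hV.one_mem
    · exact ihB hB.2 ρ
  | delta A ih => exact hB.elim
  | all A ih =>
    have hrange : Set.range (fun d => A.val I (Fin.snoc ρ d)) ⊆ V :=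
      Set.range_subset_iff.2 fun d => ih hB _
    rw [Form.val_all]
    exact hV.1.closure_subset_iff.2 hrange <| csInf_mem_closure (Set.range_nonempty _)
      ⟨0, fun _ hv => hV.nonneg (hrange hv)⟩
  | ex A ih =>
    have hrange : Set.range (fun d => A.val I (Fin.snoc ρ d)) ⊆ V :=
      Set.range_subset_iff.2 fun d => ih hB _
    rw [Form.val_ex]
    exact hV.1.closure_subset_iff.2 hrange <| csSup_mem_closure (Set.range_nonempty _)
      ⟨1, fun _ hv => hV.le_one (hrange hv)⟩

theorem Term.eval_glue (I : Interp L V) (ω : ℝ) (h1 : (1 : ℝ) ∈ V) {α : Type}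
    (v : α → I.Dom) : ∀ t : Term L α, Term.eval (I.glue ω h1) v t = Term.eval I v t
  | .var _ => rfl
  | .func f ts => congrArg (I.funMap f) (funext fun j => Term.eval_glue I ω h1 v (ts j))

theorem Interp.glue_relVal_eq_sign (hV : GodelSet V) (I : Interp L V) {ω : ℝ} (hω : 0 ≤ ω)
    (hgap : ∀ v ∈ V, v ≤ ω → v = 0) {k : ℕ} (R : L.Rel k) (v : Fin k → I.Dom) :
    (I.glue ω hV.one_mem).relVal R v = Real.sign (I.relVal R v) := by
  change (if I.relVal R v ≤ ω then I.relVal R v else 1) = _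
  split_ifs with h
  · rw [hgap _ (I.relVal_mem R v) h, Real.sign_zero]
  · exact (Real.sign_of_pos (hω.trans_lt (lt_of_not_ge h))).symm

theorem Form.val_glue_of_quantFree (hV : GodelSet V) (I : Interp L V) {ω : ℝ} (hω : 0 ≤ ω)
    (hgap : ∀ v ∈ V, v ≤ ω → v = 0) {n : ℕ} {B : Form L n} (hd : DeltaFree B)
    (hq : QuantFree B) (ρ : Fin n → I.Dom) :
    B.val (I.glue ω hV.one_mem) ρ = Real.sign (B.val I ρ) := by
  induction B with
  | falsum => exact Real.sign_zero.symm
  | atom R ts =>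
    simp only [Form.val, Term.eval_glue]
    exact I.glue_relVal_eq_sign hV hω hgap R _
  | conj A B ihA ihB =>
    simp only [Form.val, ihA hd.1 hq.1, ihB hd.2 hq.2, Real.sign_monotone.map_min]
  | disj A B ihA ihB =>
    simp only [Form.val, ihA hd.1 hq.1, ihB hd.2 hq.2, Real.sign_monotone.map_max]
  | impl A B ihA ihB =>
    simp only [Form.val, ihA hd.1 hq.1, ihB hd.2 hq.2]
    exact (Real.sign_ite_le (hV.nonneg (B.val_mem hV I hd.2 ρ))).symm
  | delta A ih => exact hd.elim
  | all A ih => exact hq.elim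
  | ex A ih => exact hq.elim

theorem Form.val_glue (hV : GodelSet V) (I : Interp L V) {ω : ℝ} (hω : 0 < ω)
    (hgap : ∀ v ∈ V, v ≤ ω → v = 0) {n : ℕ} {B : Form L n} (hd : DeltaFree B)
    (ρ : Fin n → I.Dom) :
    B.val (I.glue ω hV.one_mem) ρ = Real.sign (B.val I ρ) := by
  induction B with
  | falsum => exact Real.sign_zero.symm
  | atom R ts =>
    simp only [Form.val, Term.eval_glue]
    exact I.glue_relVal_eq_sign hV hω.le hgap R _
  | conj A B ihA ihB =>
    simp only [Form.val, ihA hd.1, ihB hd.2, Real.sign_monotone.map_min]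
  | disj A B ihA ihB =>
    simp only [Form.val, ihA hd.1, ihB hd.2, Real.sign_monotone.map_max]
  | impl A B ihA ihB =>
    simp only [Form.val, ihA hd.1, ihB hd.2]
    exact (Real.sign_ite_le (hV.nonneg (B.val_mem hV I hd.2 ρ))).symm
  | delta A ih => exact hd.elim
  | all A ih =>
    have hA := fun d => A.val_mem hV I hd (Fin.snoc ρ d)
    rw [Form.val_all, Real.sign_iInf_of_gap hω (fun d => hV.nonneg (hA d)) fun d => hgap _ (hA d)]
    exact (Form.val_all (I.glue ω hV.one_mem) A ρ).trans (iInf_congr fun d => ih hd _)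
  | ex A ih =>
    have hA := fun d => A.val_mem hV I hd (Fin.snoc ρ d)
    rw [Form.val_ex, Real.sign_iSup_of_nonneg (fun d => hV.nonneg (hA d))
      ⟨1, by rintro _ ⟨d, rfl⟩; exact hV.le_one (hA d)⟩]
    exact (Form.val_ex (I.glue ω hV.one_mem) A ρ).trans (iSup_congr fun d => ih hd _)

theorem Form.val_glue_eq_one_of_isPrenex (hV : GodelSet V) (I : Interp L V) {ω : ℝ}
    (hω : 0 ≤ ω) (hgap : ∀ v ∈ V, v ≤ ω → v = 0) {n : ℕ} {B : Form L n} (hp : IsPrenex B)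
    (hd : DeltaFree B) (ρ : Fin n → I.Dom) (hpos : 0 < B.val I ρ) :
    B.val (I.glue ω hV.one_mem) ρ = 1 := by
  induction hp with
  | qf hq => rw [Form.val_glue_of_quantFree hV I hω hgap hd hq, Real.sign_of_pos hpos]
  | @all n A _ ih =>
    rw [Form.val_all] at hpos
    have hbdd : BddBelow (Set.range fun d => A.val I (Fin.snoc ρ d)) :=
      ⟨0, by rintro _ ⟨d, rfl⟩; exact hV.nonneg (A.val_mem hV I hd _)⟩
    have hone : ∀ d, A.val (I.glue ω hV.one_mem) (Fin.snoc ρ d) = 1 :=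
      fun d => ih hd _ (hpos.trans_le (ciInf_le hbdd d))
    refine (Form.val_all (I.glue ω hV.one_mem) A ρ).trans ?_
    simp only [hone, ciInf_const]
  | @ex n A _ ih =>
    rw [Form.val_ex] at hpos
    obtain ⟨d, hdpos⟩ := exists_lt_of_lt_ciSup hpos
    have hle : ∀ d, A.val (I.glue ω hV.one_mem) (Fin.snoc ρ d) ≤ 1 :=
      fun d => hV.le_one (A.val_mem hV _ hd _)
    refine (Form.val_ex (I.glue ω hV.one_mem) A ρ).trans (le_antisymm (ciSup_le hle) ?_)
    calc (1 : ℝ) = A.val (I.glue ω hV.one_mem) (Fin.snoc ρ d) := (ih hd _ hdpos).symm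
      _ ≤ _ := le_ciSup (f := fun d => A.val (I.glue ω hV.one_mem) (Fin.snoc ρ d))
        ⟨1, by rintro _ ⟨d, rfl⟩; exact hle d⟩ d

theorem Interp.glue_relVal_eq_zero_or_one (hV : GodelSet V) (I : Interp L V) {ω : ℝ}
    (hω : 0 ≤ ω) (hgap : ∀ v ∈ V, v ≤ ω → v = 0) {k : ℕ} (R : L.Rel k) (v : Fin k → I.Dom) :
    (I.glue ω hV.one_mem).relVal R v = 0 ∨ (I.glue ω hV.one_mem).relVal R v = 1 := by
  rw [I.glue_relVal_eq_sign hV hω hgap]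
  exact Real.sign_eq_zero_or_one_of_nonneg (hV.nonneg (I.relVal_mem R v))

theorem classSat_of_sval_glue (hV : GodelSet V) (I : Interp L V) {ω : ℝ} (hω : 0 ≤ ω)
    (hgap : ∀ v ∈ V, v ≤ ω → v = 0) {A : Form L 0} (hA : A.sval (I.glue ω hV.one_mem) = 1) :
    ClassSat V A :=
  ⟨_, I.glue_relVal_eq_zero_or_one hV hω hgap, hA⟩

theorem ClassSat.oneSat {A : Form L 0} : ClassSat V A → OneSat V A
  | ⟨I, _, hI⟩ => ⟨I, hI⟩

theorem ExPrenex.isPrenex {n : ℕ} {B : Form L n} (h : ExPrenex B) : IsPrenex B := by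
  induction h with
  | qf hq => exact .qf hq
  | ex _ ih => exact .ex ih

/-- For every Gödel set `V`, 1-satisfiability coincides with
classical satisfiability for: (i) quantifier-free sentences; (ii) all
sentences, provided 0 is isolated in `V`; (iii) prenex sentences;
(iv) purely existential sentences. -/
theorem stmt_3 {L : Lang} {V : Set ℝ} (hV : GodelSet V) :
    (∀ A : Form L 0, DeltaFree A → QuantFree A → (OneSat V A ↔ ClassSat V A)) ∧
    ((∃ ε > (0:ℝ), V ∩ Set.Ioo 0 ε = ∅) →
      ∀ A : Form L 0, DeltaFree A → (OneSat V A ↔ ClassSat V A)) ∧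
    (∀ A : Form L 0, DeltaFree A → IsPrenex A → (OneSat V A ↔ ClassSat V A)) ∧
    (∀ A : Form L 0, DeltaFree A → ExPrenex A → (OneSat V A ↔ ClassSat V A)) := by
  have hgap₀ : ∀ v ∈ V, v ≤ 0 → v = 0 := fun v hv h => le_antisymm h (hV.nonneg hv)
  have prenex (A : Form L 0) (hd : DeltaFree A) (hp : IsPrenex A) :
      OneSat V A ↔ ClassSat V A :=
    ⟨fun ⟨I, hI⟩ => classSat_of_sval_glue hV I le_rfl hgap₀
      (A.val_glue_eq_one_of_isPrenex hV I le_rfl hgap₀ hp hd _ (zero_lt_one.trans_eq hI.symm)),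
      ClassSat.oneSat⟩
  refine ⟨fun A hd hq => prenex A hd (.qf hq), ?_, prenex, fun A hd hp => prenex A hd hp.isPrenex⟩
  rintro ⟨ε, hε, hiso⟩ A hd
  have hgap : ∀ v ∈ V, v ≤ ε / 2 → v = 0 := fun v hv hle => by_contra fun hne =>
    Set.eq_empty_iff_forall_notMem.1 hiso v ⟨hv, (hV.nonneg hv).lt_of_ne' hne, by linarith⟩
  refine ⟨fun ⟨I, hI⟩ => classSat_of_sval_glue hV I (half_pos hε).le hgap ?_, ClassSat.oneSat⟩
  exact (A.val_glue hV I (half_pos hε) hgap hd Fin.elim0).trans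
    (by rw [← Form.sval, hI, Real.sign_one])

end GodelPaper
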